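/- arXiv:2509.01851 — 2 statements merged into one kernel-verified Lean document; each statement's English description precedes it below -/
import Mathlib

section
/- Fiducial normal form: for any real phases α_{z,x} (indexed by z ∈ ℤ_d^{n−1}, x ∈ ℤ_d), the equal-weight superposition ψ = d^{−n/2} Σ_{z,x} e^{iα_{z,x}} Φ^{(d)}_{z,x} satisfies ψ = S_d(n)·(H^{(n)})†·D_α·H^{⊗n}|0,0,…,0⟩, where D_α is the diagonal unitary on (ℂ^d)^{⊗n} with diagonal entries e^{iα_{z,x}} in the computational basis (identifying the basis index with (z,x) ∈ ℤ_dⁿ). -/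
open Matrix Complex Finset

/-- ω = exp(2πi/d). -/
noncomputable def omg (d : ℕ) : ℂ := Complex.exp (2 * Real.pi * Complex.I / d)

/-- Generalized Pauli Z on ℂ^d: Z|j⟩ = ω^j |j⟩. -/
noncomputable def Zd (d : ℕ) : Matrix (ZMod d) (ZMod d) ℂ :=
  Matrix.diagonal fun j => omg d ^ j.val

/-- Generalized Pauli X on ℂ^d: X|j⟩ = |j+1 mod d⟩. -/
noncomputable def Xd (d : ℕ) : Matrix (ZMod d) (ZMod d) ℂ :=
  Matrix.of fun j k => if j = k + 1 then 1 else 0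

/-- Discrete Fourier transform H = d^{-1/2} Σ ω^{jk} |j⟩⟨k|. -/
noncomputable def Hd (d : ℕ) : Matrix (ZMod d) (ZMod d) ℂ :=
  Matrix.of fun j k => (Real.sqrt d : ℂ)⁻¹ * omg d ^ (j.val * k.val)

/-- Tensor product of single-qudit operators, as a matrix on (ℂ^d)^{⊗n}. -/
noncomputable def tensorOp {d n : ℕ} (A : Fin n → Matrix (ZMod d) (ZMod d) ℂ) :
    Matrix (Fin n → ZMod d) (Fin n → ZMod d) ℂ :=
  Matrix.of fun v w => ∏ i, A i (v i) (w i)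

/-- Single-site operator A acting on qudit i (identity elsewhere). -/
noncomputable def single {d n : ℕ} (i : Fin n) (A : Matrix (ZMod d) (ZMod d) ℂ) :
    Matrix (Fin n → ZMod d) (Fin n → ZMod d) ℂ :=
  tensorOp fun j => if j = i then A else 1

/-- The inner product ⟨f, g⟩ = Σ conj(f v) g v (antilinear in the first argument). -/
noncomputable def dotc {ι : Type*} [Fintype ι] (f g : ι → ℂ) : ℂ :=
  ∑ v, (starRingEnd ℂ) (f v) * g v

/-- Computational basis vector |a⟩. -/
noncomputable def ket {ι : Type*} [DecidableEq ι] (a : ι) : ι → ℂ :=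
  fun v => if v = a then 1 else 0

/-- The unitaries U_g, g = (z₁,…,z_{n−1},x) ∈ ℤ_dⁿ:
U_g = ∏_{i=1}^{n−1} (Z^{(i)}(Z^{(i+1)})⁻¹)^{zᵢ} · (X⊗⋯⊗X)^x.  -/
noncomputable def Ug (d n : ℕ) [NeZero d] [NeZero n] (g : Fin n → ZMod d) :
    Matrix (Fin n → ZMod d) (Fin n → ZMod d) ℂ :=
  (((List.finRange (n - 1)).map fun i =>
      (_root_.single (⟨i.val, by have := i.isLt; omega⟩ : Fin n) (Zd d) *
          (_root_.single (⟨i.val + 1, by have := i.isLt; omega⟩ : Fin n) (Zd d))⁻¹)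
        ^ (g ⟨i.val, by have := i.isLt; omega⟩).val).prod) *
    (tensorOp fun _ : Fin n => Xd d)
      ^ (g ⟨n - 1, by have := Nat.pos_of_ne_zero (NeZero.ne n); omega⟩).val

/-- The joint eigenstates Φ^{(d)}_{z,x} = d^{-1/2} Σ_k ω^{−kx} |s₁+k,…,s_{n−1}+k,k⟩,
with sᵢ = zᵢ + ⋯ + z_{n−1}. -/
noncomputable def Phi (d n : ℕ) [NeZero d] (z : Fin (n - 1) → ZMod d) (x : ZMod d) :
    (Fin n → ZMod d) → ℂ :=
  fun v => (Real.sqrt d : ℂ)⁻¹ * ∑ k : ZMod d,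
    (omg d ^ (k.val * x.val))⁻¹ *
      (if ∀ i : Fin n, v i =
          (if h : i.val < n - 1
            then ∑ j ∈ Finset.univ.filter (fun j : Fin (n - 1) => (⟨i.val, h⟩ : Fin (n - 1)) ≤ j), z j
            else 0) + k
        then 1 else 0)


/-- The SUM gate with target `a` and control `b`: |jₐ, j_b⟩ ↦ |jₐ + j_b, j_b⟩. -/
noncomputable def SUMg {d n : ℕ} (a b : Fin n) :
    Matrix (Fin n → ZMod d) (Fin n → ZMod d) ℂ :=
  Matrix.of fun v w => if v = Function.update w a (w a + w b) then 1 else 0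

/-- S_d(n) = SUM_{(2→1)}·SUM_{(3→2)}···SUM_{(n→n−1)} (0-based sites (0,1),(1,2),…). -/
noncomputable def Sgate (d n : ℕ) [NeZero d] :
    Matrix (Fin n → ZMod d) (Fin n → ZMod d) ℂ :=
  (((List.finRange (n - 1)).map fun i =>
    SUMg (d := d) (n := n) ⟨i.val, by have := i.isLt; omega⟩
      ⟨i.val + 1, by have := i.isLt; omega⟩)).prod

/-!
`H^{⊗n}|0⟩` is the uniform vector, so `D_α H^{⊗n}|0⟩` has amplitude `d^{-n/2} e^{iα_g}` at `g`.
The gate `S_d(n)` permutes the computational basis: `(S_d(n) ψ)(v) = ψ(Δv)` where `Δv` lists the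
adjacent differences `vᵢ - vᵢ₊₁` followed by `vₙ`. Dually, `Φ_{z,x}` is supported on the `v` whose
adjacent differences are `z`, where it equals `d^{-1/2} ω^{-vₙ x}`. So both sides at `v` equal
`d^{-(n+1)/2} Σₓ e^{iα_{z,x}} ω^{-vₙ x}` with `z` the adjacent differences of `v`: the inverse Fourier
transform on the last qudit.
-/
lemma star_omg (d : ℕ) : starRingEnd ℂ (omg d) = (omg d)⁻¹ := by
  rw [omg, ← Complex.exp_conj, ← Complex.exp_neg]
  simp [map_div₀, Complex.conj_ofReal, map_ofNat, neg_div]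

lemma Hd_conjTranspose_apply (d : ℕ) (j k : ZMod d) :
    (Hd d)ᴴ j k = (Real.sqrt d : ℂ)⁻¹ * (omg d ^ (j.val * k.val))⁻¹ := by
  simp [Hd, Matrix.conjTranspose_apply, star_omg, inv_pow, Nat.mul_comm]

lemma tensorOp_mulVec_ket {d n : ℕ} [NeZero d] (A : Fin n → Matrix (ZMod d) (ZMod d) ℂ)
    (a : Fin n → ZMod d) : tensorOp A *ᵥ ket a = fun w => ∏ i, A i (w i) (a i) := by
  funext w
  simp [Matrix.mulVec, dotProduct, ket, tensorOp]

section SingleSite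

variable {d n : ℕ} (i : Fin n) (A : Matrix (ZMod d) (ZMod d) ℂ)

lemma single_conjTranspose : (_root_.single i A)ᴴ = _root_.single i Aᴴ := by
  ext v w
  simp only [Matrix.conjTranspose_apply, _root_.single, tensorOp, Matrix.of_apply, star_prod]
  refine Finset.prod_congr rfl fun j _ => ?_
  split_ifs <;> simp [Matrix.conjTranspose_apply, Matrix.one_apply, eq_comm]

variable [NeZero d]

lemma single_apply_eq_sum (u w : Fin n → ZMod d) :
    _root_.single i A u w = ∑ x, if w = Function.update u i x then A (u i) x else 0 := by
  simp only [Function.eq_update_iff, ite_and, Finset.sum_ite_eq, Finset.mem_univ, if_true]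
  rw [_root_.single, tensorOp, Matrix.of_apply,
    ← Finset.mul_prod_erase _ _ (Finset.mem_univ i), if_pos rfl, mul_comm]
  trans (∏ j ∈ Finset.univ.erase i, if w j = u j then (1 : ℂ) else 0) * A (u i) (w i)
  · congr 1
    refine Finset.prod_congr rfl fun j hj => ?_
    simp [Finset.ne_of_mem_erase hj, Matrix.one_apply, eq_comm]
  · simp [Finset.prod_boole]

lemma single_mulVec_apply (ψ : (Fin n → ZMod d) → ℂ) (u : Fin n → ZMod d) :
    (_root_.single i A *ᵥ ψ) u = ∑ x, A (u i) x * ψ (Function.update u i x) := by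
  simp only [Matrix.mulVec, dotProduct]
  simp_rw [single_apply_eq_sum, Finset.sum_mul, ite_mul, zero_mul]
  rw [Finset.sum_comm]
  simp

end SingleSite

lemma SUMg_mulVec {d n : ℕ} [NeZero d] {a b : Fin n} (hab : a ≠ b) (ψ : (Fin n → ZMod d) → ℂ) :
    SUMg a b *ᵥ ψ = fun v => ψ (Function.update v a (v a - v b)) := by
  funext v
  have hinv : ∀ w : Fin n → ZMod d,
      v = Function.update w a (w a + w b) ↔ w = Function.update v a (v a - v b) := by
    intro w
    simp only [Function.eq_update_iff]
    constructor <;> rintro ⟨ha, hrest⟩ <;> refine ⟨?_, fun j hj => (hrest j hj).symm⟩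
    · rw [ha, hrest b hab.symm, add_sub_cancel_right]
    · rw [ha, hrest b hab.symm, sub_add_cancel]
  simp [Matrix.mulVec, dotProduct, SUMg, hinv]

section AdjacentDifferences

variable {G : Type*} {n : ℕ}

def diffFrom [Sub G] (j : ℕ) (v : Fin n → G) : Fin n → G :=
  fun i => if h : j ≤ i.val ∧ i.val + 1 < n then v i - v ⟨i.val + 1, h.2⟩ else v i

lemma diffFrom_of_le [Sub G] {j : ℕ} (hj : n ≤ j + 1) (v : Fin n → G) : diffFrom j v = v := by
  funext i
  exact dif_neg (by omega)

lemma diffFrom_succ_update [Sub G] {j : ℕ} (hj : j + 1 < n) (v : Fin n → G) :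
    diffFrom (j + 1) (Function.update v ⟨j, by omega⟩ (v ⟨j, by omega⟩ - v ⟨j + 1, hj⟩))
      = diffFrom j v := by
  funext i
  simp only [diffFrom, Function.update_apply, Fin.ext_iff]
  split_ifs <;> first | omega | rfl | (cases ‹(i : ℕ) = j›; rfl)

lemma diffFrom_apply_last [Sub G] (j : ℕ) (hn : 0 < n) (v : Fin n → G) :
    diffFrom j v ⟨n - 1, by omega⟩ = v ⟨n - 1, by omega⟩ :=
  dif_neg (show ¬(j ≤ n - 1 ∧ n - 1 + 1 < n) by omega)

lemma update_diffFrom_zero_last [Sub G] (hn : 0 < n) (v : Fin n → G) (x : G) :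
    (fun i : Fin (n - 1) => Function.update (diffFrom 0 v) ⟨n - 1, by omega⟩ x ⟨i.val, by omega⟩)
      = fun i => v ⟨i.val, by omega⟩ - v ⟨i.val + 1, by omega⟩ := by
  funext i
  rw [Function.update_of_ne (Fin.ne_of_val_ne (show i.val ≠ n - 1 by omega))]
  exact dif_pos ⟨Nat.zero_le _, show i.val + 1 < n by omega⟩

end AdjacentDifferences

section SumGates

variable {d n : ℕ} [NeZero d]

lemma mulVec_prod_drop_SUMg {j : ℕ} (hj : j ≤ n - 1) (ψ : (Fin n → ZMod d) → ℂ) :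
    (((List.finRange (n - 1)).drop j).map fun i =>
        SUMg (d := d) (n := n) ⟨i.val, by have := i.isLt; omega⟩
          ⟨i.val + 1, by have := i.isLt; omega⟩).prod *ᵥ ψ
      = fun v => ψ (diffFrom j v) := by
  induction hj using Nat.decreasingInduction with
  | self =>
    rw [List.drop_eq_nil_of_le (by simp)]
    simp [diffFrom_of_le (show n ≤ n - 1 + 1 by omega)]
  | of_succ j hj ih =>
    rw [List.drop_eq_getElem_cons (by simpa using hj), List.map_cons, List.prod_cons,
      ← Matrix.mulVec_mulVec, ih, SUMg_mulVec (by simp [Fin.ext_iff])]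
    simp only [List.getElem_finRange, Fin.val_cast]
    funext v
    exact congrArg ψ (diffFrom_succ_update (j := j) (by omega) v)

lemma Sgate_mulVec (ψ : (Fin n → ZMod d) → ℂ) : Sgate d n *ᵥ ψ = fun v => ψ (diffFrom 0 v) :=
  mulVec_prod_drop_SUMg (Nat.zero_le _) ψ

end SumGates

section TailSums

variable {G : Type*} [AddCommGroup G] {n : ℕ}

lemma Fin.eq_of_sub_succ_eq {f g : Fin n → G} (hlast : ∀ i : Fin n, i.val + 1 = n → f i = g i)
    (hstep : ∀ (i : Fin n) (h : i.val + 1 < n), f i - f ⟨i.val + 1, h⟩ = g i - g ⟨i.val + 1, h⟩) :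
    f = g := by
  suffices h : ∀ k, ∀ i : Fin n, i.val + k + 1 = n → f i = g i from
    funext fun i => h (n - 1 - i.val) i (by omega)
  intro k
  induction k with
  | zero => exact hlast
  | succ k ih =>
    intro i hi
    have := hstep i (by omega)
    rw [ih ⟨i.val + 1, by omega⟩ (by simp only; omega)] at this
    exact sub_left_injective this

/-- The paper's `sᵢ = zᵢ + ⋯ + z_{n-1}`, extended by `sₙ = 0` (0-based here). -/
def tailSum (z : Fin (n - 1) → G) (i : Fin n) : G :=
  if h : i.val < n - 1
  then ∑ j ∈ Finset.univ.filter (fun j : Fin (n - 1) => (⟨i.val, h⟩ : Fin (n - 1)) ≤ j), z j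
  else 0

lemma tailSum_of_succ_eq (z : Fin (n - 1) → G) (i : Fin n) (hi : i.val + 1 = n) :
    tailSum z i = 0 :=
  dif_neg (by omega)

lemma tailSum_eq_sum_filter (z : Fin (n - 1) → G) (i : Fin n) :
    tailSum z i = ∑ j ∈ Finset.univ.filter (fun j : Fin (n - 1) => i.val ≤ j.val), z j := by
  rw [tailSum]
  split_ifs with h
  · rfl
  · refine (Finset.sum_eq_zero fun j hj => ?_).symm
    have := (Finset.mem_filter.1 hj).2
    omega

lemma tailSum_sub_succ (z : Fin (n - 1) → G) (i : Fin n) (h : i.val + 1 < n) :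
    tailSum z i - tailSum z ⟨i.val + 1, h⟩ = z ⟨i.val, by omega⟩ := by
  have hsplit : Finset.univ.filter (fun j : Fin (n - 1) => i.val ≤ j.val)
      = insert ⟨i.val, by omega⟩ (Finset.univ.filter (fun j : Fin (n - 1) => i.val + 1 ≤ j.val)) := by
    ext j
    simp only [Finset.mem_filter, Finset.mem_insert, Finset.mem_univ, true_and, Fin.ext_iff]
    omega
  rw [tailSum_eq_sum_filter, tailSum_eq_sum_filter, hsplit, Finset.sum_insert (by simp),
    add_sub_cancel_right]

lemma forall_eq_tailSum_add_iff (hn : 0 < n) (z : Fin (n - 1) → G) (k : G) (v : Fin n → G) :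
    (∀ i, v i = tailSum z i + k) ↔
      z = (fun i => v ⟨i.val, by omega⟩ - v ⟨i.val + 1, by omega⟩) ∧ k = v ⟨n - 1, by omega⟩ := by
  constructor
  · intro h
    refine ⟨funext fun i => ?_, ?_⟩
    · rw [h, h, add_sub_add_right_eq_sub, tailSum_sub_succ]
    · rw [h, tailSum_of_succ_eq _ _ (by simp only; omega), zero_add]
  · rintro ⟨rfl, rfl⟩
    rw [← funext_iff]
    refine Fin.eq_of_sub_succ_eq (fun i hi => ?_) (fun i h => ?_)
    · rw [tailSum_of_succ_eq _ _ hi, zero_add]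
      exact congrArg v (Fin.ext (by simp only; omega))
    · rw [add_sub_add_right_eq_sub, tailSum_sub_succ]

end TailSums

lemma Phi_apply {d n : ℕ} [NeZero d] (hn : 0 < n) (z : Fin (n - 1) → ZMod d) (x : ZMod d)
    (v : Fin n → ZMod d) :
    Phi d n z x v =
      if z = (fun i => v ⟨i.val, by omega⟩ - v ⟨i.val + 1, by omega⟩)
      then (Real.sqrt d : ℂ)⁻¹ * (omg d ^ ((v ⟨n - 1, by omega⟩).val * x.val))⁻¹ else 0 := by
  change (Real.sqrt d : ℂ)⁻¹ * ∑ k : ZMod d, (omg d ^ (k.val * x.val))⁻¹ *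
    (if ∀ i, v i = tailSum z i + k then 1 else 0) = _
  simp_rw [forall_eq_tailSum_add_iff hn]
  split_ifs with hz <;> simp [hz]

theorem stmt1 (d n : ℕ) [NeZero d] (hn : 2 ≤ n)
    (α : (Fin (n - 1) → ZMod d) → ZMod d → ℝ) :
    (fun v : Fin n → ZMod d =>
      ((Real.sqrt d : ℂ) ^ n)⁻¹ * ∑ z : Fin (n - 1) → ZMod d, ∑ x : ZMod d,
        Complex.exp (α z x * Complex.I) * Phi d n z x v)
    = (Sgate d n * (single (⟨n - 1, by omega⟩ : Fin n) (Hd d))ᴴ *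
        Matrix.diagonal (fun v : Fin n → ZMod d =>
          Complex.exp ((α (fun i : Fin (n - 1) => v ⟨i.val, by have := i.isLt; omega⟩)
            (v ⟨n - 1, by omega⟩) : ℝ) * Complex.I)) *
        tensorOp fun _ : Fin n => Hd d) *ᵥ ket (fun _ : Fin n => (0 : ZMod d)) := by
  funext v
  simp only [← Matrix.mulVec_mulVec, tensorOp_mulVec_ket, Sgate_mulVec, single_conjTranspose,
    single_mulVec_apply, Matrix.mulVec_diagonal, Phi_apply (by omega : 0 < n)]
  rw [Finset.sum_comm, Finset.mul_sum]
  simp only [mul_ite, mul_zero, Finset.sum_ite_eq', Finset.mem_univ, if_true]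
  refine Finset.sum_congr rfl fun x _ => ?_
  rw [update_diffFrom_zero_last (by omega), Function.update_self, Hd_conjTranspose_apply,
    diffFrom_apply_last 0 (by omega)]
  simp [Hd]
  ring
end

section
/- Uniqueness of the Krawtchouk linear system for odd n: let n ≥ 1 be odd and set N = (n−1)/2. (i) If real numbers q₀,…,q_N satisfy Σ_{k=0}^{N} q_k·Kⁿ_k(2m) = δ_{m,0} for every m ∈ {0,1,…,N}, then q_k = 1/2^{n−1} for all k. (ii) If real numbers r₀,…,r_N satisfy Σ_{k=0}^{N} r_k·Kⁿ_k(2m) = 0 for every m ∈ {0,1,…,N}, then r_k = 0 for all k. -/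
open Finset

/-- The binary Krawtchouk polynomial Kⁿ_k(m) = Σ_{m₁=0}^{m} (−1)^{m₁} C(m,m₁) C(n−m,k−m₁),
with out-of-range binomial coefficients equal to zero. -/
def Kraw (n k m : ℕ) : ℤ :=
  ∑ m₁ ∈ Finset.range (m + 1),
    (-1) ^ m₁ * (Nat.choose m m₁ : ℤ) *
      (if m₁ ≤ k then (Nat.choose (n - m) (k - m₁) : ℤ) else 0)

/-!
`Kraw n k m` is the coefficient of `X^k` in `(1 - X)^m (1 + X)^(n - m)`. Evaluating at `1` gives
`Σ_k Kⁿ_k(m) = 2ⁿ δ_{m,0}`, and for even `m` this polynomial is palindromic, so for odd `n` the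
half sum `Σ_{k ≤ N} Kⁿ_k(2m)` is `2^(n-1) δ_{m,0}`: the constant `1/2^(n-1)` solves (i), which
thus reduces to (ii). For (ii), `Kⁿ_k(x)` is a polynomial in `x` of degree exactly `k`, so
`Σ_k r_k Kⁿ_k(x)` has degree `≤ N` and vanishes at the `N + 1` points `0, 2, …, 2N`. It is
therefore zero, and polynomials of distinct degrees are linearly independent.
-/

open Polynomial Nat

theorem one_sub_X_pow_eq_sum {R : Type*} [CommRing R] (m : ℕ) :
    (1 - X : R[X]) ^ m = ∑ i ∈ range (m + 1), C ((-1) ^ i * (m.choose i : R)) * X ^ i := by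
  rw [sub_eq_neg_add, add_pow]
  refine sum_congr rfl fun i _ => ?_
  rw [one_pow, mul_one, neg_pow (X : R[X]) i]
  simp only [map_mul, map_pow, map_neg, map_one, map_natCast]
  ring

theorem coeff_one_sub_X_pow {R : Type*} [CommRing R] (m i : ℕ) :
    ((1 - X : R[X]) ^ m).coeff i = (-1) ^ i * m.choose i := by
  rw [one_sub_X_pow_eq_sum, finsetSum_coeff]
  simp only [coeff_C_mul_X_pow]
  rw [sum_ite_eq]
  split_ifs with h
  · rfl
  · rw [choose_eq_zero_of_lt (by simpa using h)]
    simp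

theorem reverse_pow {R : Type*} [Semiring R] [NoZeroDivisors R] (p : R[X]) (k : ℕ) :
    (p ^ k).reverse = p.reverse ^ k := by
  induction k with
  | zero => simpa using reverse_C (1 : R)
  | succ k ih => rw [pow_succ, reverse_mul_of_domain, ih, pow_succ]

theorem reverse_X {R : Type*} [Semiring R] : (X : R[X]).reverse = 1 := by
  rw [← one_mul X, reverse_mul_X, ← C_1, reverse_C]

theorem sum_range_eq_two_nsmul_of_symm {M : Type*} [AddCommMonoid M] (f : ℕ → M) (N : ℕ)
    (hf : ∀ k ≤ 2 * N + 1, f (2 * N + 1 - k) = f k) :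
    ∑ k ∈ range (2 * N + 2), f k = 2 • ∑ k ∈ range (N + 1), f k := by
  rw [show 2 * N + 2 = (N + 1) + (N + 1) by ring, sum_range_add, two_nsmul]
  congr 1
  rw [← sum_range_reflect]
  refine sum_congr rfl fun k hk => ?_
  have hk := mem_range.1 hk
  rw [← hf k (by omega)]
  congr 1
  omega

noncomputable def krawGen (n m : ℕ) : ℤ[X] := (1 - X) ^ m * (1 + X) ^ (n - m)

theorem kraw_eq_coeff_krawGen (n k m : ℕ) : Kraw n k m = (krawGen n m).coeff k := by
  rw [krawGen, one_sub_X_pow_eq_sum, sum_mul, finsetSum_coeff, Kraw]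
  refine sum_congr rfl fun i _ => ?_
  rw [mul_assoc (C _), coeff_C_mul, coeff_X_pow_mul', coeff_one_add_X_pow]

theorem kraw_eq_sum_antidiagonal (n k m : ℕ) :
    Kraw n k m = ∑ x ∈ antidiagonal k, (-1) ^ x.1 * (m.choose x.1 : ℤ) * (n - m).choose x.2 := by
  rw [kraw_eq_coeff_krawGen, krawGen, coeff_mul]
  simp only [coeff_one_sub_X_pow, coeff_one_add_X_pow]

theorem natDegree_krawGen {n m : ℕ} (hm : m ≤ n) : (krawGen n m).natDegree = n := by
  rw [krawGen]
  compute_degree!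
  all_goals omega

theorem reverse_krawGen (n : ℕ) {m : ℕ} (hm : Even m) : (krawGen n m).reverse = krawGen n m := by
  have h₁ : (1 - X : ℤ[X]).reverse = -(1 - X) := by
    rw [sub_eq_neg_add, ← C_1, reverse_add_C, reverse_neg, reverse_X]
    simp
  have h₂ : (1 + X : ℤ[X]).reverse = 1 + X := by
    rw [add_comm, ← C_1, reverse_add_C, reverse_X]
    simp [add_comm]
  rw [krawGen, reverse_mul_of_domain, reverse_pow, reverse_pow, h₁, h₂, hm.neg_pow]

theorem sum_range_kraw {n m : ℕ} (hm : m ≤ n) :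
    ∑ k ∈ range (n + 1), Kraw n k m = 0 ^ m * 2 ^ (n - m) := by
  have heval := eval_eq_sum_range' (n := n + 1) (by rw [natDegree_krawGen hm]; omega) (1 : ℤ)
  simp only [one_pow, mul_one, ← kraw_eq_coeff_krawGen] at heval
  rw [← heval, krawGen]
  norm_num

theorem kraw_symm_of_even {n m k : ℕ} (hm : m ≤ n) (hme : Even m) (hk : k ≤ n) :
    Kraw n (n - k) m = Kraw n k m := by
  rw [kraw_eq_coeff_krawGen, kraw_eq_coeff_krawGen]
  nth_rw 2 [← reverse_krawGen n hme]
  rw [coeff_reverse, natDegree_krawGen hm, revAt_le hk]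

theorem sum_range_half_kraw {N m : ℕ} (hm : m ≤ N) :
    ∑ k ∈ range (N + 1), Kraw (2 * N + 1) k (2 * m) = if m = 0 then 2 ^ (2 * N) else 0 := by
  have h := sum_range_kraw (n := 2 * N + 1) (m := 2 * m) (by omega)
  rw [sum_range_eq_two_nsmul_of_symm _ _
    fun k hk => kraw_symm_of_even (by omega) (even_two_mul m) hk] at h
  split_ifs with h₀
  · subst h₀
    simp only [mul_zero, pow_zero, one_mul, Nat.sub_zero, pow_succ, two_nsmul] at h ⊢
    linarith
  · simpa [h₀] using h

section Domain

variable {R : Type*} [CommRing R] [IsDomain R]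

theorem natDegree_C_sub_X (a : R) : (C a - X).natDegree = 1 := by
  compute_degree!

theorem natDegree_comp_C_sub_X (p : R[X]) (a : R) :
    (p.comp (C a - X)).natDegree = p.natDegree := by
  rw [natDegree_comp, natDegree_C_sub_X, mul_one]

theorem leadingCoeff_comp_C_sub_X (p : R[X]) (a : R) :
    (p.comp (C a - X)).leadingCoeff = (-1) ^ p.natDegree * p.leadingCoeff := by
  rw [leadingCoeff_comp (by rw [natDegree_C_sub_X]; exact one_ne_zero), ← neg_sub,
    leadingCoeff_neg, leadingCoeff_X_sub_C, mul_comm]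

end Domain

variable {K : Type*} [Field K]

variable (K) in
noncomputable def choosePoly (j : ℕ) : K[X] := C (j ! : K)⁻¹ * descPochhammer K j

variable (K) in
noncomputable def krawSummand (n i j : ℕ) : K[X] :=
  C ((-1) ^ i) * choosePoly K i * (choosePoly K j).comp (C (n : K) - X)

variable (K) in
noncomputable def krawPoly (n k : ℕ) : K[X] :=
  ∑ x ∈ antidiagonal k, krawSummand K n x.1 x.2

theorem leadingCoeff_choosePoly (j : ℕ) : (choosePoly K j).leadingCoeff = (j ! : K)⁻¹ := by
  rw [choosePoly, leadingCoeff_mul, leadingCoeff_C, (monic_descPochhammer K j).leadingCoeff,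
    mul_one]

section CharZero

variable [CharZero K]

theorem choosePoly_eval_natCast (j m : ℕ) : (choosePoly K j).eval (m : K) = m.choose j := by
  rw [choosePoly, eval_mul, eval_C, descPochhammer_eval_eq_descFactorial,
    descFactorial_eq_factorial_mul_choose, cast_mul,
    inv_mul_cancel_left₀ (by simp [factorial_ne_zero])]

theorem natDegree_choosePoly (j : ℕ) : (choosePoly K j).natDegree = j := by
  rw [choosePoly, natDegree_C_mul (by simp [factorial_ne_zero]), descPochhammer_natDegree]

theorem krawPoly_eval_natCast {n m : ℕ} (k : ℕ) (hm : m ≤ n) :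
    (krawPoly K n k).eval (m : K) = Kraw n k m := by
  rw [kraw_eq_sum_antidiagonal, krawPoly, eval_finsetSum]
  push_cast
  refine sum_congr rfl fun x _ => ?_
  rw [krawSummand, eval_mul, eval_mul, eval_C, eval_comp, eval_sub, eval_C, eval_X,
    ← cast_sub hm, choosePoly_eval_natCast, choosePoly_eval_natCast]

theorem leadingCoeff_krawSummand (n i j : ℕ) :
    (krawSummand K n i j).leadingCoeff = (-1) ^ (i + j) * (i ! * j ! : K)⁻¹ := by
  rw [krawSummand, leadingCoeff_mul, leadingCoeff_mul, leadingCoeff_C, leadingCoeff_choosePoly,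
    leadingCoeff_comp_C_sub_X, natDegree_choosePoly, leadingCoeff_choosePoly, pow_add, mul_inv]
  ring

theorem natDegree_krawSummand (n i j : ℕ) : (krawSummand K n i j).natDegree = i + j := by
  have h : (krawSummand K n i j).leadingCoeff ≠ 0 := by
    rw [leadingCoeff_krawSummand]
    simp [factorial_ne_zero]
  rw [krawSummand, leadingCoeff_mul] at h
  rw [krawSummand, natDegree_mul' h, natDegree_C_mul (by simp), natDegree_comp_C_sub_X,
    natDegree_choosePoly, natDegree_choosePoly]

theorem coeff_krawSummand_add (n i j : ℕ) :
    (krawSummand K n i j).coeff (i + j) = (-1) ^ (i + j) * (i ! * j ! : K)⁻¹ := by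
  rw [← leadingCoeff_krawSummand, leadingCoeff, natDegree_krawSummand]

end CharZero

theorem degree_krawPoly [LinearOrder K] [IsStrictOrderedRing K] (n k : ℕ) :
    (krawPoly K n k).degree = k := by
  have hcoeff : ∀ x ∈ antidiagonal k,
      (krawSummand K n x.1 x.2).coeff k = (-1) ^ k * (x.1 ! * x.2 ! : K)⁻¹ := by
    rintro ⟨i, j⟩ hij
    rw [← HasAntidiagonal.mem_antidiagonal.1 hij, coeff_krawSummand_add]
  refine degree_eq_of_le_of_coeff_ne_zero ?_ ?_
  · refine degree_le_of_natDegree_le (natDegree_sum_le_of_forall_le _ _ fun x hx => ?_)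
    rw [natDegree_krawSummand, HasAntidiagonal.mem_antidiagonal.1 hx]
  · rw [krawPoly, finsetSum_coeff, sum_congr rfl hcoeff, ← mul_sum]
    exact mul_ne_zero (by simp) (sum_pos (fun x _ => by positivity) ⟨(0, k), by simp⟩).ne'

theorem eq_zero_of_sum_mul_kraw_eq_zero [LinearOrder K] [IsStrictOrderedRing K] {n N : ℕ}
    {r : ℕ → K} (s : Finset ℕ) (hs : ∀ m ∈ s, m ≤ n) (hcard : N < #s)
    (h : ∀ m ∈ s, ∑ k ∈ range (N + 1), r k * Kraw n k m = 0) :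
    ∀ k ≤ N, r k = 0 := by
  let S : Sequence K := ⟨krawPoly K n, degree_krawPoly n⟩
  set p := ∑ k ∈ range (N + 1), r k • krawPoly K n k
  have hdeg : p ∈ degreeLT K (N + 1) :=
    sum_mem fun k hk => Submodule.smul_mem _ _
      (mem_degreeLT.2 ((degree_krawPoly n k).trans_lt (by exact_mod_cast mem_range.1 hk)))
  have hp : p = 0 := by
    refine eq_zero_of_degree_lt_of_eval_index_eq_zero s cast_injective.injOn
      ((mem_degreeLT.1 hdeg).trans_le (by exact_mod_cast hcard)) fun m hm => ?_
    simpa [p, eval_finsetSum, krawPoly_eval_natCast _ (hs m hm)] using h m hm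
  exact fun k hk => linearIndependent_iff'.1 S.linearIndependent _ r hp k (mem_range.2 (by omega))

theorem stmt15_general (n : ℕ) (hodd : Odd n) :
    (∀ q : ℕ → ℝ,
      (∀ m ≤ (n - 1) / 2,
        ∑ k ∈ Finset.range ((n - 1) / 2 + 1), q k * (Kraw n k (2 * m) : ℝ)
          = if m = 0 then 1 else 0) →
      ∀ k ≤ (n - 1) / 2, q k = 1 / 2 ^ (n - 1)) ∧
    (∀ r : ℕ → ℝ,
      (∀ m ≤ (n - 1) / 2,
        ∑ k ∈ Finset.range ((n - 1) / 2 + 1), r k * (Kraw n k (2 * m) : ℝ) = 0) →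
      ∀ k ≤ (n - 1) / 2, r k = 0) := by
  obtain ⟨N, rfl⟩ := hodd
  simp only [Nat.add_sub_cancel, Nat.mul_div_cancel_left N two_pos]
  have homogeneous : ∀ r : ℕ → ℝ,
      (∀ m ≤ N, ∑ k ∈ range (N + 1), r k * (Kraw (2 * N + 1) k (2 * m) : ℝ) = 0) →
      ∀ k ≤ N, r k = 0 := fun r hr =>
    eq_zero_of_sum_mul_kraw_eq_zero (n := 2 * N + 1) ((range (N + 1)).image (2 * ·))
      (fun m hm => by
        obtain ⟨j, hj, rfl⟩ := mem_image.1 hm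
        rw [mem_range] at hj
        omega)
      (by rw [card_image_of_injective _ (mul_right_injective₀ two_ne_zero), card_range]; omega)
      (by simpa using fun m hm => hr m (by omega))
  refine ⟨fun q hq k hk => ?_, homogeneous⟩
  have hdiff := homogeneous (fun k => q k - 1 / 2 ^ (2 * N)) (fun m hm => by
    have hsum := congrArg (fun z : ℤ => (z : ℝ)) (sum_range_half_kraw hm)
    simp only [sub_mul, sum_sub_distrib, ← mul_sum, hq m hm]
    push_cast at hsum
    rw [hsum]
    split_ifs <;> simp) k hk
  linarith [hdiff]

theorem stmt15 (n : ℕ) (hn : 1 ≤ n) (hodd : Odd n) :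
    (∀ q : ℕ → ℝ,
      (∀ m ≤ (n - 1) / 2,
        ∑ k ∈ Finset.range ((n - 1) / 2 + 1), q k * (Kraw n k (2 * m) : ℝ)
          = if m = 0 then 1 else 0) →
      ∀ k ≤ (n - 1) / 2, q k = 1 / 2 ^ (n - 1)) ∧
    (∀ r : ℕ → ℝ,
      (∀ m ≤ (n - 1) / 2,
        ∑ k ∈ Finset.range ((n - 1) / 2 + 1), r k * (Kraw n k (2 * m) : ℝ) = 0) →
      ∀ k ≤ (n - 1) / 2, r k = 0) :=
  stmt15_general n hodd
end
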